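/- arXiv:1910.13844 — 2 statements merged into one kernel-verified Lean document; each statement's English description precedes it below -/
import Mathlib

section
/- For $\|\boldsymbol{\omega}\| > k_b$, the truncated Green function's Fourier transform satisfies the bound $|\widehat{g_t}(\boldsymbol{\omega})| \le \frac{2}{(\|\boldsymbol{\omega}\| - k_b)\|\boldsymbol{\omega}\|}$, where $\widehat{g_t}(\boldsymbol{\omega}) = \frac{1}{\|\boldsymbol{\omega}\|^2 - k_b^2}\left(1 - e^{j R k_b}(\cos(R\|\boldsymbol{\omega}\|) + j k_b R\,\mathrm{sinc}(R\|\boldsymbol{\omega}\|))\right)$ and $R = \sqrt{3}L$ with $k_b R \cdot \mathrm{sinc}(R\|\boldsymbol{\omega}\|) \le k_b/\|\boldsymbol{\omega}\| \le 1$. -/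
/-! The bracket `1 - e^{iRk_b}(cos(Rt) + i k_b R sinc(Rt))`, with `t = ‖ω‖`, has modulus at most 2:
since `R sinc(Rt) = sin(Rt)/t`, the factor is `cos(Rt) + i (k_b/t) sin(Rt)` with `k_b/t ≤ 1`,
which lies in the closed unit disc. Dividing by `t² - k_b² ≥ (t - k_b) t` gives the bound. -/

open Complex

noncomputable def sinc (x : ℝ) : ℝ := if x = 0 then 1 else Real.sin x / x

theorem mul_sinc_mul (R : ℝ) {t : ℝ} (ht : t ≠ 0) : R * sinc (R * t) = Real.sin (R * t) / t := by
  rcases eq_or_ne R 0 with rfl | hR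
  · simp
  · rw [sinc, if_neg (mul_ne_zero hR ht)]
    field_simp

theorem Complex.norm_cos_add_I_mul_sin_le_one (x : ℝ) {s : ℝ} (hs : |s| ≤ 1) :
    ‖(Real.cos x : ℂ) + I * ((s * Real.sin x : ℝ) : ℂ)‖ ≤ 1 := by
  rw [mul_comm I, norm_add_mul_I, Real.sqrt_le_one]
  have hs2 : s ^ 2 ≤ 1 := by rwa [sq_le_one_iff_abs_le_one]
  nlinarith [Real.sin_sq_add_cos_sq x, sq_nonneg (Real.sin x)]

theorem Complex.norm_one_sub_exp_I_mul_mul_le_two (θ : ℝ) {z : ℂ} (hz : ‖z‖ ≤ 1) :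
    ‖1 - exp (I * θ) * z‖ ≤ 2 :=
  calc ‖1 - exp (I * θ) * z‖ ≤ ‖(1 : ℂ)‖ + ‖exp (I * θ)‖ * ‖z‖ := by
        rw [← norm_mul]; exact norm_sub_le _ _
    _ ≤ 2 := by rw [norm_one, norm_exp_I_mul_ofReal]; linarith

theorem truncated_green_fourier_bound_general
    (kb : ℝ) (hkb : 0 < kb)
    (R : ℝ)
    (ghat : EuclideanSpace ℝ (Fin 3) → ℂ)
    (hghat : ∀ ω : EuclideanSpace ℝ (Fin 3),
      ghat ω = (1 / ((‖ω‖ ^ 2 - kb ^ 2 : ℝ) : ℂ)) *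
        (1 - Complex.exp (Complex.I * (R : ℂ) * (kb : ℂ)) *
          (((Real.cos (R * ‖ω‖) : ℝ) : ℂ) +
            Complex.I * (kb : ℂ) * (R : ℂ) * ((sinc (R * ‖ω‖) : ℝ) : ℂ)))) :
    ∀ ω : EuclideanSpace ℝ (Fin 3), kb < ‖ω‖ →
      ‖ghat ω‖ ≤ 2 / ((‖ω‖ - kb) * ‖ω‖) := by
  intro ω hω
  set t := ‖ω‖
  have ht : 0 < t := hkb.trans hω
  have hfactor : (Real.cos (R * t) : ℂ) + I * kb * R * (sinc (R * t) : ℂ) =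
      (Real.cos (R * t) : ℂ) + I * ((kb / t * Real.sin (R * t) : ℝ) : ℂ) := by
    rw [div_mul_comm, mul_comm (Real.sin (R * t) / t), ← mul_sinc_mul R ht.ne']
    push_cast; ring
  have hs : |kb / t| ≤ 1 := by
    rw [abs_of_pos (div_pos hkb ht), div_le_one ht]; exact hω.le
  have hbracket := norm_one_sub_exp_I_mul_mul_le_two (R * kb)
    (norm_cos_add_I_mul_sin_le_one (R * t) hs)
  have hden : (t - kb) * t ≤ t ^ 2 - kb ^ 2 := by nlinarith
  have hden_pos : 0 < (t - kb) * t := mul_pos (sub_pos.2 hω) ht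
  rw [hghat ω, hfactor, norm_mul, one_div, norm_inv, norm_real,
    Real.norm_of_nonneg (hden_pos.le.trans hden), ← div_eq_inv_mul]
  push_cast at hbracket ⊢
  rw [← mul_assoc] at hbracket
  calc _ ≤ 2 / (t ^ 2 - kb ^ 2) := by gcongr; linarith
    _ ≤ 2 / ((t - kb) * t) := by gcongr

/-- bound on the Fourier transform of the truncated Green function
outside the ball of radius k_b. -/
theorem truncated_green_fourier_bound
    (L kb : ℝ) (hL : 0 < L) (hkb : 0 < kb)
    (R : ℝ) (hR : R = Real.sqrt 3 * L)
    (ghat : EuclideanSpace ℝ (Fin 3) → ℂ)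
    (hghat : ∀ ω : EuclideanSpace ℝ (Fin 3),
      ghat ω = (1 / ((‖ω‖ ^ 2 - kb ^ 2 : ℝ) : ℂ)) *
        (1 - Complex.exp (Complex.I * (R : ℂ) * (kb : ℂ)) *
          (((Real.cos (R * ‖ω‖) : ℝ) : ℂ) +
            Complex.I * (kb : ℂ) * (R : ℂ) * ((sinc (R * ‖ω‖) : ℝ) : ℂ)))) :
    ∀ ω : EuclideanSpace ℝ (Fin 3), kb < ‖ω‖ →
      ‖ghat ω‖ ≤ 2 / ((‖ω‖ - kb) * ‖ω‖) :=
  truncated_green_fourier_bound_general kb hkb R ghat hghat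
end

section
/- (DFT subsampling/folding, 1D version of Proposition 1's key step.) Let $p \in 2\mathbb{N}\setminus\{0\}$, $n \in 2\mathbb{N}\setminus\{0\}$, let $\hat{\mathbf{g}} \in \mathbb{C}^{np}$ be indexed over $[\![-np/2+1; np/2]\!]$, and let $\mathbf{v}_p \in \mathbb{C}^{np}$ be supported on $[\![-n/2+1; n/2]\!]$. Then for all $k \in [\![-n/2+1; n/2]\!]$: $(\mathbf{F}_{np}^{-1}(\hat{\mathbf{g}} \odot \mathbf{F}_{np}\mathbf{v}_p))[k] = \sum_{\tilde{q} \in [\![-n+1; n]\!]} \mathbf{v}_2[\tilde{q}]\, \mathbf{g}^m[k - \tilde{q}]$, where $\mathbf{v}_2$ is the restriction of $\mathbf{v}_p$ to $[\![-n+1; n]\!]$ (twofold zero-padding of $\mathbf{v}$) and $\mathbf{g}^m[k] = \frac{2}{p}\sum_{s=0}^{p/2-1} \mathbf{F}_{2n}^{-1}\big(\hat{\mathbf{g}}[\tfrac{p}{2}\cdot - s]\big)[k]\, e^{-2\pi j k s/(np)}$. -/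
open Complex

/-- N-point DFT over the index set [[-N/2+1 ; N/2]]. -/
noncomputable def dft1 (N : ℤ) (w : ℤ → ℂ) (q : ℤ) : ℂ :=
  ∑ k ∈ Finset.Icc (-N / 2 + 1) (N / 2),
    w k * Complex.exp (-(2 * (Real.pi : ℂ) * Complex.I * (k : ℂ) * (q : ℂ) / (N : ℂ)))

/-- N-point inverse DFT over the index set [[-N/2+1 ; N/2]]. -/
noncomputable def idft1 (N : ℤ) (w : ℤ → ℂ) (k : ℤ) : ℂ :=
  (1 / (N : ℂ)) * ∑ q ∈ Finset.Icc (-N / 2 + 1) (N / 2),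
    w q * Complex.exp (2 * (Real.pi : ℂ) * Complex.I * (k : ℂ) * (q : ℂ) / (N : ℂ))

lemma fold_sum (m n : ℕ) (hm : 0 < m) (f : ℤ → ℂ) :
    ∑ s ∈ Finset.range m, ∑ q' ∈ Finset.Icc (-(n:ℤ)+1) (n:ℤ), f ((m:ℤ) * q' - (s:ℤ))
      = ∑ q ∈ Finset.Icc (-((m:ℤ)*n)+1) ((m:ℤ)*n), f q := by
  have hm0 : (m:ℤ) ≠ 0 := by positivity
  have hmpos : (0:ℤ) < m := by positivity
  rw [← Finset.sum_product']
  refine Finset.sum_nbij' (i := fun x => (m:ℤ) * x.2 - (x.1:ℤ))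
    (j := fun q => (((m:ℤ) * ((q + m - 1) / m) - q).toNat, (q + m - 1) / m))
    ?_ ?_ ?_ ?_ ?_
  · rintro ⟨s, q'⟩ hx
    simp only [Finset.mem_product, Finset.mem_range, Finset.mem_Icc] at hx ⊢
    obtain ⟨hs, h1, h2⟩ := hx
    have hs' : (s:ℤ) < m := by exact_mod_cast hs
    have u1 : (m:ℤ) * q' ≤ m * n := mul_le_mul_of_nonneg_left h2 (by positivity)
    have u2 : (m:ℤ) * (-(n:ℤ)+1) ≤ m * q' := mul_le_mul_of_nonneg_left h1 (by positivity)
    have e : (m:ℤ) * (-(n:ℤ)+1) = -((m:ℤ)*n) + m := by ring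
    constructor <;> omega
  · intro q hq
    simp only [Finset.mem_Icc] at hq
    simp only [Finset.mem_product, Finset.mem_range, Finset.mem_Icc]
    have hmod := Int.emod_nonneg (q + m - 1) hm0
    have hmod2 := Int.emod_lt_of_pos (q + m - 1) hmpos
    have hdm := Int.mul_ediv_add_emod (q + m - 1) m
    set c : ℤ := (q + m - 1) / m with hc
    -- bounds on c
    have hub : (m:ℤ) * c < m * (n + 1) := by
      have : (m:ℤ) * (n+1) = m * n + m := by ring
      omega
    have hlb : (m:ℤ) * (-(n:ℤ)) < m * c := by
      have : (m:ℤ) * (-(n:ℤ)) = -((m:ℤ)*n) := by ring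
      omega
    have hub' : c < n + 1 := lt_of_mul_lt_mul_left hub (by positivity)
    have hlb' : -(n:ℤ) < c := lt_of_mul_lt_mul_left hlb (by positivity)
    refine ⟨?_, by omega, by omega⟩
    have : ((m:ℤ) * c - q).toNat < (m:ℤ) := by omega
    exact_mod_cast this
  · rintro ⟨s, q'⟩ hx
    simp only [Finset.mem_product, Finset.mem_range, Finset.mem_Icc] at hx
    obtain ⟨hs, h1, h2⟩ := hx
    have hs' : (s:ℤ) < m := by exact_mod_cast hs
    have hc : ((m:ℤ) * q' - s + m - 1) / m = q' := by
      have : (m:ℤ) * q' - s + m - 1 = (m - 1 - s) + m * q' := by ring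
      rw [this, Int.add_mul_ediv_left _ _ hm0, Int.ediv_eq_zero_of_lt (by omega) (by omega),
        zero_add]
    simp only [hc, Prod.mk.injEq]
    exact ⟨by omega, trivial⟩
  · intro q hq
    simp only [Finset.mem_Icc] at hq
    have hmod := Int.emod_nonneg (q + m - 1) hm0
    have hmod2 := Int.emod_lt_of_pos (q + m - 1) hmpos
    have hdm := Int.mul_ediv_add_emod (q + m - 1) m
    simp only
    omega
  · rintro ⟨s, q'⟩ hx
    rfl

lemma gm_eq (n p : ℕ) (hn : 0 < n) (hp : 0 < p) (hpe : Even p) (ghat : ℤ → ℂ) (k : ℤ) :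
    (2 / (p : ℂ)) *
      ∑ s ∈ Finset.range (p / 2),
        idft1 (2 * n) (fun q' => ghat ((p : ℤ) / 2 * q' - (s : ℤ))) k *
          Complex.exp (-(2 * (Real.pi : ℂ) * Complex.I * (k : ℂ) * (s : ℂ) /
            ((n : ℂ) * (p : ℂ))))
      = idft1 ((n : ℤ) * p) ghat k := by
  obtain ⟨m, hm2⟩ := hpe
  have hmpos : 0 < m := by omega
  have hn0 : (n:ℂ) ≠ 0 := Nat.cast_ne_zero.mpr hn.ne'
  have hp0 : (p:ℂ) ≠ 0 := Nat.cast_ne_zero.mpr hp.ne'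
  have hm0 : (m:ℂ) ≠ 0 := Nat.cast_ne_zero.mpr hmpos.ne'
  have hpm : (p:ℂ) = 2 * m := by push_cast [hm2]; ring
  have hIcc2 : Finset.Icc (-(2*(n:ℤ))/2+1) ((2*(n:ℤ))/2) = Finset.Icc (-(n:ℤ)+1) (n:ℤ) := by
    congr 1 <;> omega
  have hX : ((n:ℤ)*(p:ℤ)) = 2*((m:ℤ)*n) := by push_cast [hm2]; ring
  have hIccN : Finset.Icc (-((n:ℤ)*(p:ℤ))/2+1) (((n:ℤ)*(p:ℤ))/2)
      = Finset.Icc (-((m:ℤ)*n)+1) ((m:ℤ)*n) := by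
    rw [hX]; congr 1 <;> omega
  have hp2 : p / 2 = m := by omega
  rw [idft1, hIccN, hp2,
    ← fold_sum m n hmpos (fun q => ghat q * Complex.exp
      (2 * (Real.pi : ℂ) * Complex.I * (k : ℂ) * (q : ℂ) / (((n:ℤ)*(p:ℤ) : ℤ) : ℂ)))]
  rw [Finset.mul_sum, Finset.mul_sum]
  refine Finset.sum_congr rfl fun s hs => ?_
  rw [idft1, hIcc2]
  have hpz : ((p:ℤ))/2 = (m:ℤ) := by omega
  rw [hpz, Finset.mul_sum, Finset.mul_sum, Finset.sum_mul, Finset.mul_sum]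
  refine Finset.sum_congr rfl fun q' hq' => ?_
  have hexp : Complex.exp (2 * (Real.pi : ℂ) * Complex.I * (k : ℂ) * (q' : ℂ) / ((2*(n:ℤ) : ℤ) : ℂ))
      * Complex.exp (-(2 * (Real.pi : ℂ) * Complex.I * (k : ℂ) * (s : ℂ) / ((n : ℂ) * (p : ℂ))))
      = Complex.exp (2 * (Real.pi : ℂ) * Complex.I * (k : ℂ) * (((m:ℤ) * q' - (s:ℤ) : ℤ) : ℂ)
          / (((n:ℤ)*(p:ℤ) : ℤ) : ℂ)) := by
    rw [← Complex.exp_add]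
    congr 1
    push_cast [hpm]
    field_simp
    ring
  calc (2 / (p:ℂ)) * ((1 / (((2*(n:ℤ) : ℤ)) : ℂ)) *
        (ghat ((m:ℤ) * q' - (s:ℤ)) *
          Complex.exp (2 * (Real.pi : ℂ) * Complex.I * (k : ℂ) * (q' : ℂ) / ((2*(n:ℤ) : ℤ) : ℂ))) *
        Complex.exp (-(2 * (Real.pi : ℂ) * Complex.I * (k : ℂ) * (s : ℂ) / ((n : ℂ) * (p : ℂ)))))
      = ((2 / (p:ℂ)) * (1 / (((2*(n:ℤ) : ℤ)) : ℂ))) * ghat ((m:ℤ) * q' - (s:ℤ)) *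
        (Complex.exp (2 * (Real.pi : ℂ) * Complex.I * (k : ℂ) * (q' : ℂ) / ((2*(n:ℤ) : ℤ) : ℂ)) *
         Complex.exp (-(2 * (Real.pi : ℂ) * Complex.I * (k : ℂ) * (s : ℂ) / ((n : ℂ) * (p : ℂ))))) := by
        ring
    _ = (1 / (((n:ℤ)*(p:ℤ) : ℤ) : ℂ)) * (ghat ((m:ℤ) * q' - (s:ℤ)) *
        Complex.exp (2 * (Real.pi : ℂ) * Complex.I * (k : ℂ) * (((m:ℤ) * q' - (s:ℤ) : ℤ) : ℂ)
          / (((n:ℤ)*(p:ℤ) : ℤ) : ℂ))) := by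
        rw [hexp]
        have hc : ((2 / (p:ℂ)) * (1 / (((2*(n:ℤ) : ℤ)) : ℂ))) = 1 / (((n:ℤ)*(p:ℤ) : ℤ) : ℂ) := by
          push_cast; field_simp
        rw [hc]; ring

/-- 1D DFT folding: a circular convolution on a p-times padded grid equals a
circular (aperiodic, since the support is small enough) convolution on a twofold-padded grid
with the modified kernel g^m. -/
theorem dft_folding_1d
    (n p : ℕ) (hn : 0 < n) (hp : 0 < p) (hne : Even n) (hpe : Even p)
    (ghat vp : ℤ → ℂ)
    (hsupp : ∀ k : ℤ, k ∉ Finset.Icc (-(n : ℤ) / 2 + 1) ((n : ℤ) / 2) → vp k = 0)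
    (gm : ℤ → ℂ)
    (hgm : ∀ k : ℤ, gm k = (2 / (p : ℂ)) *
      ∑ s ∈ Finset.range (p / 2),
        idft1 (2 * n) (fun q' => ghat ((p : ℤ) / 2 * q' - (s : ℤ))) k *
          Complex.exp (-(2 * (Real.pi : ℂ) * Complex.I * (k : ℂ) * (s : ℂ) /
            ((n : ℂ) * (p : ℂ)))) ) :
    ∀ k ∈ Finset.Icc (-(n : ℤ) / 2 + 1) ((n : ℤ) / 2),
      idft1 ((n : ℤ) * p) (fun q => ghat q * dft1 ((n : ℤ) * p) vp q) k =
        ∑ qt ∈ Finset.Icc (-(n : ℤ) + 1) (n : ℤ), vp qt * gm (k - qt) := by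
  intro k hk
  have hgm' : ∀ j : ℤ, gm j = idft1 ((n : ℤ) * p) ghat j := fun j => by
    rw [hgm j, gm_eq n p hn hp hpe ghat j]
  have hnle : (n:ℤ) ≤ (n:ℤ) * p := le_mul_of_one_le_right (by positivity)
    (by exact_mod_cast hp)
  have hN0 : ((((n:ℤ) * p : ℤ)) : ℂ) ≠ 0 := by
    push_cast
    exact mul_ne_zero (Nat.cast_ne_zero.mpr hn.ne') (Nat.cast_ne_zero.mpr hp.ne')
  -- RHS: shrink to the support and substitute gm
  have hRHS : ∑ qt ∈ Finset.Icc (-(n : ℤ) + 1) (n : ℤ), vp qt * gm (k - qt)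
      = ∑ qt ∈ Finset.Icc (-(n : ℤ) / 2 + 1) ((n : ℤ) / 2),
          vp qt * idft1 ((n : ℤ) * p) ghat (k - qt) := by
    rw [← Finset.sum_subset (s₁ := Finset.Icc (-(n : ℤ) / 2 + 1) ((n : ℤ) / 2))
      (by intro x hx; simp only [Finset.mem_Icc] at *; omega)
      (fun x _ hx => by rw [hsupp x hx, zero_mul])]
    exact Finset.sum_congr rfl fun qt _ => by rw [hgm']
  rw [hRHS]
  -- LHS: unfold, restrict the inner sum to the support, swap sums
  rw [idft1]
  have hsub : Finset.Icc (-(n : ℤ) / 2 + 1) ((n : ℤ) / 2)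
      ⊆ Finset.Icc (-((n:ℤ) * p) / 2 + 1) (((n:ℤ) * p) / 2) := by
    intro x hx
    simp only [Finset.mem_Icc] at *
    set M := (n:ℤ) * p with hM
    omega
  have hdft : ∀ q ∈ Finset.Icc (-((n:ℤ)*p) / 2 + 1) (((n:ℤ)*p) / 2),
      ghat q * dft1 ((n : ℤ) * p) vp q *
        Complex.exp (2 * (Real.pi : ℂ) * Complex.I * (k : ℂ) * (q : ℂ) /
          ((((n:ℤ) * p : ℤ)) : ℂ)) =
      ghat q * (∑ k' ∈ Finset.Icc (-(n : ℤ) / 2 + 1) ((n : ℤ) / 2),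
          vp k' * Complex.exp (-(2 * (Real.pi : ℂ) * Complex.I * (k' : ℂ) * (q : ℂ) /
            ((((n:ℤ) * p : ℤ)) : ℂ)))) *
        Complex.exp (2 * (Real.pi : ℂ) * Complex.I * (k : ℂ) * (q : ℂ) /
          ((((n:ℤ) * p : ℤ)) : ℂ)) := by
    intro q _
    simp only [dft1]
    rw [← Finset.sum_subset hsub (fun x _ hx => by rw [hsupp x hx, zero_mul])]
  rw [Finset.sum_congr rfl hdft]
  simp only [Finset.mul_sum, Finset.sum_mul]
  rw [Finset.sum_comm]
  refine Finset.sum_congr rfl fun k' hk' => ?_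
  rw [idft1, Finset.mul_sum, Finset.mul_sum]
  refine Finset.sum_congr rfl fun q hq => ?_
  have hexp : Complex.exp (2 * (Real.pi : ℂ) * Complex.I * (k : ℂ) * (q : ℂ) /
        ((((n:ℤ) * p : ℤ)) : ℂ)) *
      Complex.exp (-(2 * (Real.pi : ℂ) * Complex.I * (k' : ℂ) * (q : ℂ) /
        ((((n:ℤ) * p : ℤ)) : ℂ)))
      = Complex.exp (2 * (Real.pi : ℂ) * Complex.I * ((k - k' : ℤ) : ℂ) * (q : ℂ) /
        ((((n:ℤ) * p : ℤ)) : ℂ)) := by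
    rw [← Complex.exp_add]
    congr 1
    push_cast
    field_simp
    ring
  calc (1 / ((((n:ℤ) * p : ℤ)) : ℂ)) * (ghat q *
        (vp k' * Complex.exp (-(2 * (Real.pi : ℂ) * Complex.I * (k' : ℂ) * (q : ℂ) /
          ((((n:ℤ) * p : ℤ)) : ℂ)))) *
        Complex.exp (2 * (Real.pi : ℂ) * Complex.I * (k : ℂ) * (q : ℂ) /
          ((((n:ℤ) * p : ℤ)) : ℂ)))
      = vp k' * ((1 / ((((n:ℤ) * p : ℤ)) : ℂ)) * (ghat q *
        (Complex.exp (2 * (Real.pi : ℂ) * Complex.I * (k : ℂ) * (q : ℂ) /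
          ((((n:ℤ) * p : ℤ)) : ℂ)) *
         Complex.exp (-(2 * (Real.pi : ℂ) * Complex.I * (k' : ℂ) * (q : ℂ) /
          ((((n:ℤ) * p : ℤ)) : ℂ)))))) := by ring
    _ = vp k' * ((1 / ((((n:ℤ) * p : ℤ)) : ℂ)) * (ghat q *
        Complex.exp (2 * (Real.pi : ℂ) * Complex.I * ((k - k' : ℤ) : ℂ) * (q : ℂ) /
          ((((n:ℤ) * p : ℤ)) : ℂ)))) := by rw [hexp]
end
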